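/- Let G be a finite graph with probability weights μ. The following are equivalent: (a) there exists n with ᾱ(G^n) > 1/2; (b) lim_{n→∞} ᾱ(G^n) = 1; (c) there is an independent set I of G with μ(I) > μ(N(I)). -/

import Mathlib

open Finset Filter

/-- `I` is an independent set of vertices in `G`. -/
def IsIndepSet {V : Type*} (G : SimpleGraph V) (I : Finset V) : Prop :=
  ∀ u ∈ I, ∀ v ∈ I, ¬ G.Adj u v

/-- The neighborhood `N(I)`: vertices adjacent to at least one vertex of `I`. -/
noncomputable def nbhd {V : Type*} [Fintype V] (G : SimpleGraph V) (I : Finset V) : Finset V :=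
  @Finset.filter _ (fun v => ∃ u ∈ I, G.Adj u v) (Classical.decPred _) Finset.univ

/-- Measure of a finite set of vertices: sum of the weights. -/
def fmeas {V : Type*} (μ : V → ℝ) (S : Finset V) : ℝ := ∑ v ∈ S, μ v

/-- The `n`-fold tensor (categorical) power of `G`. -/
def tpow {V : Type*} (G : SimpleGraph V) (n : ℕ) : SimpleGraph (Fin n → V) where
  Adj u v := u ≠ v ∧ ∀ i, G.Adj (u i) (v i)
  symm := ⟨fun u v h => ⟨h.1.symm, fun i => (h.2 i).symm⟩⟩
  loopless := ⟨fun u h => h.1 rfl⟩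

/-- Product measure of a set of `n`-tuples. -/
noncomputable def pmeas {V : Type*} (μ : V → ℝ) (n : ℕ) (S : Finset (Fin n → V)) : ℝ :=
  ∑ x ∈ S, ∏ i, μ (x i)

/-- `ᾱ(G)`: the supremum (= maximum) of the measures of independent sets of `G`. -/
noncomputable def alphaBar {V : Type*} (G : SimpleGraph V) (μ : V → ℝ) : ℝ :=
  sSup {x : ℝ | ∃ I : Finset V, IsIndepSet G I ∧ x = fmeas μ I}

/-- `ᾱ(G^n)` with the product measure. -/
noncomputable def alphaPow {V : Type*} (G : SimpleGraph V) (μ : V → ℝ) (n : ℕ) : ℝ :=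
  alphaBar (tpow G n) (fun x => ∏ i, μ (x i))

/-!
If every independent set `I` satisfies `μ(I) ≤ μ(N(I))`, then so does every set `A` (apply the
hypothesis to `A \ N(A)`). This expansion property tensorizes: slicing a set of `(n+1)`-tuples
along the first coordinate reduces it to a weighted form of the property on `G`, which follows
from the unweighted one by a layer-cake argument. An independent set of `G^n` is disjoint from
its neighbourhood, so in that case `ᾱ(G^n) ≤ 1/2` for every `n ≥ 1`.

Conversely, if `μ(I) > μ(N(I))`, the function `z = 1_I - 1_{N(I)}` has positive mean and
satisfies `z a + z b ≤ 0` along every edge. So the tuples with `∑ z(xᵢ) > 0` form an independent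
set of `G^n`, whose measure is `1 - O(1/n)` by Chebyshev's inequality.
-/

section

variable {V : Type*} {G : SimpleGraph V} {μ : V → ℝ}

lemma fmeas_mono (hμ0 : ∀ v, 0 ≤ μ v) {S T : Finset V} (h : S ⊆ T) : fmeas μ S ≤ fmeas μ T :=
  sum_le_sum_of_subset_of_nonneg h fun v _ _ => hμ0 v

lemma fmeas_union [DecidableEq V] {S T : Finset V} (h : Disjoint S T) :
    fmeas μ (S ∪ T) = fmeas μ S + fmeas μ T :=
  sum_union h

lemma prod_apply_nonneg (hμ0 : ∀ v, 0 ≤ μ v) {n : ℕ} (x : Fin n → V) : 0 ≤ ∏ i, μ (x i) :=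
  prod_nonneg fun i _ => hμ0 (x i)

lemma pmeas_nonneg (hμ0 : ∀ v, 0 ≤ μ v) {n : ℕ} (S : Finset (Fin n → V)) : 0 ≤ pmeas μ n S :=
  sum_nonneg fun x _ => prod_apply_nonneg hμ0 x

lemma pmeas_mono (hμ0 : ∀ v, 0 ≤ μ v) {n : ℕ} {S T : Finset (Fin n → V)} (h : S ⊆ T) :
    pmeas μ n S ≤ pmeas μ n T :=
  fmeas_mono (prod_apply_nonneg hμ0) h

lemma alphaBar_le {a : ℝ} (ha : 0 ≤ a) (h : ∀ I, IsIndepSet G I → fmeas μ I ≤ a) :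
    alphaBar G μ ≤ a :=
  Real.sSup_le (by rintro x ⟨I, hI, rfl⟩; exact h I hI) ha

variable [Fintype V]

lemma sum_pi_prod_eq_one (hμ1 : ∑ v, μ v = 1) (n : ℕ) : ∑ x : Fin n → V, ∏ i, μ (x i) = 1 := by
  rw [← Fintype.prod_sum (fun (_ : Fin n) v => μ v)]
  simp [hμ1]

section Expansion

lemma mem_nbhd {I : Finset V} {v : V} : v ∈ nbhd G I ↔ ∃ u ∈ I, G.Adj u v := by
  simp [nbhd]

lemma IsIndepSet.disjoint_nbhd {I : Finset V} (hI : IsIndepSet G I) : Disjoint I (nbhd G I) :=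
  Finset.disjoint_left.2 fun v hv hvN => by
    obtain ⟨u, hu, huv⟩ := mem_nbhd.1 hvN
    exact hI u hu v hv huv

lemma fmeas_le_fmeas_nbhd_of_isIndepSet (hμ0 : ∀ v, 0 ≤ μ v)
    (hind : ∀ I, IsIndepSet G I → fmeas μ I ≤ fmeas μ (nbhd G I)) (A : Finset V) :
    fmeas μ A ≤ fmeas μ (nbhd G A) := by
  classical
  set I := A \ nbhd G A
  have hI : IsIndepSet G I := fun u hu v hv huv =>
    (mem_sdiff.1 hv).2 (mem_nbhd.2 ⟨u, (mem_sdiff.1 hu).1, huv⟩)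
  have hdisj : Disjoint (nbhd G I) (A ∩ nbhd G A) := Finset.disjoint_left.2 fun b hb hbA => by
    obtain ⟨u, hu, hub⟩ := mem_nbhd.1 hb
    exact (mem_sdiff.1 hu).2 (mem_nbhd.2 ⟨b, (mem_inter.1 hbA).1, hub.symm⟩)
  have hsub : nbhd G I ∪ (A ∩ nbhd G A) ⊆ nbhd G A := union_subset
    (fun v hv => by
      obtain ⟨u, hu, huv⟩ := mem_nbhd.1 hv
      exact mem_nbhd.2 ⟨u, (mem_sdiff.1 hu).1, huv⟩)
    inter_subset_right
  calc fmeas μ A = fmeas μ I + fmeas μ (A ∩ nbhd G A) := by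
        rw [← fmeas_union (disjoint_sdiff_inter A _), sdiff_union_inter]
    _ ≤ fmeas μ (nbhd G I) + fmeas μ (A ∩ nbhd G A) := by gcongr; exact hind I hI
    _ = fmeas μ (nbhd G I ∪ (A ∩ nbhd G A)) := (fmeas_union hdisj).symm
    _ ≤ fmeas μ (nbhd G A) := fmeas_mono hμ0 hsub

lemma sum_mul_sub_ite [DecidableEq V] (f : V → ℝ) (A : Finset V) (c : ℝ) :
    ∑ v, μ v * (f v - if v ∈ A then c else 0) = ∑ v, μ v * f v - c * fmeas μ A := by
  simp only [mul_sub, mul_ite, mul_zero, sum_sub_distrib, sum_ite_mem, univ_inter, fmeas,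
    mul_comm c, sum_mul]

/-- Removing the lowest level `c` of `f` from its support `A` and from `N(A)` preserves the
hypotheses and shrinks the support, while the claim drops by `c μ(A) ≤ c μ(N(A))`. -/
lemma sum_mul_le_sum_mul_of_adj (hμ0 : ∀ v, 0 ≤ μ v)
    (hexp : ∀ A, fmeas μ A ≤ fmeas μ (nbhd G A)) {f F : V → ℝ} (hf : ∀ v, 0 ≤ f v)
    (hF : ∀ v, 0 ≤ F v) (hfF : ∀ u v, G.Adj u v → f u ≤ F v) :
    ∑ v, μ v * f v ≤ ∑ v, μ v * F v := by
  classical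
  induction hk : #{v | 0 < f v} using Nat.strong_induction_on generalizing f F with
  | _ k ih =>
  set A : Finset V := {v | 0 < f v}
  have hf0 : ∀ v ∉ A, f v = 0 := fun v hv =>
    le_antisymm (not_lt.1 fun h => hv (mem_filter.2 ⟨mem_univ v, h⟩)) (hf v)
  rcases A.eq_empty_or_nonempty with hA | hA
  · simp only [hf0, hA, notMem_empty, not_false_eq_true, mul_zero, sum_const_zero]
    exact sum_nonneg fun v _ => mul_nonneg (hμ0 v) (hF v)
  obtain ⟨v₀, hv₀, hmin⟩ := A.exists_min_image f hA
  have hc : 0 < f v₀ := (mem_filter.1 hv₀).2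
  have hFc : ∀ v ∈ nbhd G A, f v₀ ≤ F v := fun v hv => by
    obtain ⟨u, hu, huv⟩ := mem_nbhd.1 hv
    exact (hmin u hu).trans (hfF u v huv)
  set f' : V → ℝ := fun v => f v - if v ∈ A then f v₀ else 0
  set F' : V → ℝ := fun v => F v - if v ∈ nbhd G A then f v₀ else 0
  have hf' : ∀ v, 0 ≤ f' v := fun v => by
    by_cases hv : v ∈ A <;> simp [f', hv, hmin, hf0]
  have hF' : ∀ v, 0 ≤ F' v := fun v => by
    by_cases hv : v ∈ nbhd G A <;> simp [F', hv, hFc, hF]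
  have hfF' : ∀ u v, G.Adj u v → f' u ≤ F' v := fun u v huv => by
    by_cases hu : u ∈ A
    · simp only [f', F', hu, mem_nbhd.2 ⟨u, hu, huv⟩, if_true]
      linarith [hfF u v huv]
    · simpa [f', hu, hf0] using hF' v
  have hsupp : #{v | 0 < f' v} < k := by
    rw [← hk]
    refine card_lt_card ((ssubset_iff_of_subset fun v hv => ?_).2 ⟨v₀, hv₀, ?_⟩)
    · by_contra hvA
      simp [f', hvA, hf0] at hv
    · simp [f', hv₀]
  have := ih _ hsupp hf' hF' hfF' rfl
  rw [sum_mul_sub_ite, sum_mul_sub_ite] at this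
  nlinarith [hexp A]

end Expansion

section Tensorization

variable {n : ℕ}

/-- Unlike `nbhd (tpow G n)`, this omits the condition `x ≠ y`, so that the expansion inequality
`pmeas S ≤ pmeas (tensorNbhd G n S)` also holds at `n = 0`, where the induction starts. -/
noncomputable def tensorNbhd (G : SimpleGraph V) (n : ℕ) (S : Finset (Fin n → V)) :
    Finset (Fin n → V) :=
  open scoped Classical in {y | ∃ x ∈ S, ∀ i, G.Adj (x i) (y i)}

noncomputable def headSlice (g : V) (T : Finset (Fin (n + 1) → V)) : Finset (Fin n → V) :=
  open scoped Classical in {y | Fin.cons g y ∈ T}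

lemma mem_tensorNbhd {S : Finset (Fin n → V)} {y : Fin n → V} :
    y ∈ tensorNbhd G n S ↔ ∃ x ∈ S, ∀ i, G.Adj (x i) (y i) := by
  simp [tensorNbhd]

lemma mem_headSlice {g : V} {T : Finset (Fin (n + 1) → V)} {y : Fin n → V} :
    y ∈ headSlice g T ↔ Fin.cons g y ∈ T := by
  simp [headSlice]

lemma pmeas_succ (T : Finset (Fin (n + 1) → V)) :
    pmeas μ (n + 1) T = ∑ g, μ g * pmeas μ n (headSlice g T) := by
  classical
  rw [pmeas, ← Fintype.sum_ite_mem, ← (Fin.consEquiv fun _ => V).sum_comp,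
    Fintype.sum_prod_type]
  refine sum_congr rfl fun g _ => ?_
  rw [pmeas, ← Fintype.sum_ite_mem (headSlice g T), mul_sum]
  refine sum_congr rfl fun y _ => ?_
  simp only [Fin.consEquiv, Equiv.coe_fn_mk, Fin.prod_univ_succ, Fin.cons_zero, Fin.cons_succ,
    mem_headSlice, mul_ite, mul_zero]

lemma headSlice_tensorNbhd {S : Finset (Fin (n + 1) → V)} {g g' : V} (hgg' : G.Adj g g') :
    tensorNbhd G n (headSlice g S) ⊆ headSlice g' (tensorNbhd G (n + 1) S) := fun y' hy' => by
  obtain ⟨y, hy, hyy'⟩ := mem_tensorNbhd.1 hy'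
  refine mem_headSlice.2 (mem_tensorNbhd.2 ⟨Fin.cons g y, mem_headSlice.1 hy, fun i => ?_⟩)
  cases i using Fin.cases with
  | zero => simpa using hgg'
  | succ j => simpa using hyy' j

lemma pmeas_le_pmeas_tensorNbhd (hμ0 : ∀ v, 0 ≤ μ v)
    (hexp : ∀ A, fmeas μ A ≤ fmeas μ (nbhd G A)) (n : ℕ) (S : Finset (Fin n → V)) :
    pmeas μ n S ≤ pmeas μ n (tensorNbhd G n S) := by
  induction n with
  | zero => exact pmeas_mono hμ0 fun x hx =>
      mem_tensorNbhd.2 ⟨x, hx, fun i => i.elim0⟩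
  | succ n ih =>
    rw [pmeas_succ, pmeas_succ]
    exact sum_mul_le_sum_mul_of_adj hμ0 hexp (fun g => pmeas_nonneg hμ0 _)
      (fun g => pmeas_nonneg hμ0 _) fun g g' hgg' =>
        (ih _).trans (pmeas_mono hμ0 (headSlice_tensorNbhd hgg'))

lemma tensorNbhd_subset_nbhd_tpow (hn : n ≠ 0) (S : Finset (Fin n → V)) :
    tensorNbhd G n S ⊆ nbhd (tpow G n) S := fun y hy => by
  obtain ⟨x, hx, hxy⟩ := mem_tensorNbhd.1 hy
  have hne : x ≠ y := fun h => (hxy ⟨0, Nat.pos_of_ne_zero hn⟩).ne (congrFun h _)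
  exact mem_nbhd.2 ⟨x, hx, hne, hxy⟩

end Tensorization

section AlphaBar

lemma fmeas_le_alphaBar (hμ0 : ∀ v, 0 ≤ μ v) {I : Finset V} (hI : IsIndepSet G I) :
    fmeas μ I ≤ alphaBar G μ :=
  le_csSup ⟨fmeas μ univ, by rintro x ⟨J, -, rfl⟩; exact fmeas_mono hμ0 (subset_univ J)⟩
    ⟨I, hI, rfl⟩

lemma alphaBar_le_half (hμ0 : ∀ v, 0 ≤ μ v) (hμ1 : ∑ v, μ v = 1)
    (hind : ∀ I, IsIndepSet G I → fmeas μ I ≤ fmeas μ (nbhd G I)) : alphaBar G μ ≤ 1 / 2 := by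
  classical
  refine alphaBar_le (by norm_num) fun I hI => ?_
  have hunion : fmeas μ I + fmeas μ (nbhd G I) ≤ 1 :=
    (fmeas_union hI.disjoint_nbhd).symm.trans_le (hμ1 ▸ fmeas_mono hμ0 (subset_univ _))
  linarith [hind I hI]

lemma alphaPow_le_half (hμ0 : ∀ v, 0 ≤ μ v) (hμ1 : ∑ v, μ v = 1)
    (hind : ∀ I, IsIndepSet G I → fmeas μ I ≤ fmeas μ (nbhd G I)) {n : ℕ} (hn : n ≠ 0) :
    alphaPow G μ n ≤ 1 / 2 :=
  alphaBar_le_half (prod_apply_nonneg hμ0) (sum_pi_prod_eq_one hμ1 n) fun S _ =>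
    (pmeas_le_pmeas_tensorNbhd hμ0 (fmeas_le_fmeas_nbhd_of_isIndepSet hμ0 hind) n S).trans
      (pmeas_mono hμ0 (tensorNbhd_subset_nbhd_tpow hn S))

end AlphaBar

section SecondMoment

variable {n : ℕ}

lemma sum_pi_prod_mul_mul (hμ1 : ∑ v, μ v = 1) {w : V → ℝ} (hw : ∑ v, μ v * w v = 0)
    (i j : Fin n) :
    ∑ x : Fin n → V, (∏ k, μ (x k)) * (w (x i) * w (x j)) =
      if i = j then ∑ v, μ v * w v ^ 2 else 0 := by
  classical
  have hfactor : ∀ x : Fin n → V, (∏ k, μ (x k)) * (w (x i) * w (x j)) =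
      ∏ k, μ (x k) * (if k = i then w (x k) else 1) * (if k = j then w (x k) else 1) := by
    intro x
    rw [prod_mul_distrib, prod_mul_distrib, prod_ite_eq' univ i, prod_ite_eq' univ j]
    simp only [mem_univ, if_true]
    ring
  simp_rw [hfactor]
  rw [← Fintype.prod_sum fun k v => μ v * (if k = i then w v else 1) * (if k = j then w v else 1)]
  split_ifs with hij
  · subst hij
    rw [Fintype.prod_eq_single i fun k hk => by simp [hk, hμ1]]
    simp [sq, mul_assoc]
  · exact prod_eq_zero (mem_univ i) (by simpa [hij] using hw)

lemma sum_pi_prod_mul_sq_sum (hμ1 : ∑ v, μ v = 1) {w : V → ℝ} (hw : ∑ v, μ v * w v = 0) :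
    ∑ x : Fin n → V, (∏ k, μ (x k)) * (∑ i, w (x i)) ^ 2 = n * ∑ v, μ v * w v ^ 2 := by
  simp_rw [sq, sum_mul_sum, mul_sum]
  rw [sum_comm]
  simp_rw [sum_comm (γ := Fin n → V), sum_pi_prod_mul_mul hμ1 hw]
  simp [sq, mul_sum]

lemma pmeas_sum_nonpos_le (hμ0 : ∀ v, 0 ≤ μ v) (hμ1 : ∑ v, μ v = 1) {z : V → ℝ} {m : ℝ}
    (hm : 0 < m) (hzm : ∑ v, μ v * z v = m) (hn : n ≠ 0) :
    pmeas μ n {x | ∑ i, z (x i) ≤ 0} ≤ (∑ v, μ v * (z v - m) ^ 2) / (m ^ 2 * n) := by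
  have hw : ∑ v, μ v * (z v - m) = 0 := by
    rw [← sub_self m]
    simp only [mul_sub, sum_sub_distrib, hzm, ← sum_mul, hμ1, one_mul]
  rw [le_div_iff₀ (by positivity)]
  calc pmeas μ n {x | ∑ i, z (x i) ≤ 0} * (m ^ 2 * n)
      ≤ ∑ x ∈ ({x | ∑ i, z (x i) ≤ 0} : Finset (Fin n → V)),
          (∏ k, μ (x k)) * (∑ i, (z (x i) - m)) ^ 2 / n := by
        rw [pmeas, sum_mul]
        refine sum_le_sum fun x hx => ?_
        rw [le_div_iff₀ (by positivity), mul_assoc]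
        refine mul_le_mul_of_nonneg_left ?_ (prod_apply_nonneg hμ0 x)
        have hx : ∑ i, z (x i) ≤ 0 := (mem_filter.1 hx).2
        rw [sum_sub_distrib, sum_const, card_univ, Fintype.card_fin, nsmul_eq_mul]
        have hnm : (0 : ℝ) ≤ n * m := by positivity
        nlinarith [mul_nonneg (neg_nonneg.2 hx) hnm]
    _ ≤ ∑ x : Fin n → V, (∏ k, μ (x k)) * (∑ i, (z (x i) - m)) ^ 2 / n :=
        sum_le_sum_of_subset_of_nonneg (subset_univ _) fun x _ _ => by
          have := prod_apply_nonneg hμ0 x; positivity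
    _ = ∑ v, μ v * (z v - m) ^ 2 := by
        rw [← sum_div, sum_pi_prod_mul_sq_sum hμ1 hw]
        field_simp

end SecondMoment

section Concentration

lemma isIndepSet_tpow_sum_pos {z : V → ℝ} (hz : ∀ a b, G.Adj a b → z a + z b ≤ 0) (n : ℕ) :
    IsIndepSet (tpow G n) {x | 0 < ∑ i, z (x i)} := fun x hx y hy hxy => by
  have hsum : ∑ i, z (x i) + ∑ i, z (y i) ≤ 0 := by
    rw [← sum_add_distrib]
    exact sum_nonpos fun i _ => hz _ _ (hxy.2 i)
  linarith [(mem_filter.1 hx).2, (mem_filter.1 hy).2]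

lemma alphaPow_le_one (hμ0 : ∀ v, 0 ≤ μ v) (hμ1 : ∑ v, μ v = 1) (n : ℕ) :
    alphaPow G μ n ≤ 1 :=
  alphaBar_le zero_le_one fun S _ =>
    (pmeas_mono hμ0 (subset_univ S)).trans_eq (sum_pi_prod_eq_one hμ1 n)

lemma tendsto_alphaPow_of_sum_pos (hμ0 : ∀ v, 0 ≤ μ v) (hμ1 : ∑ v, μ v = 1) {z : V → ℝ}
    (hz : ∀ a b, G.Adj a b → z a + z b ≤ 0) (hmean : 0 < ∑ v, μ v * z v) :
    Tendsto (alphaPow G μ) atTop (nhds 1) := by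
  set m := ∑ v, μ v * z v
  set C := ∑ v, μ v * (z v - m) ^ 2
  have hlower : ∀ n : ℕ, n ≠ 0 → 1 - C / m ^ 2 / n ≤ alphaPow G μ n := fun n hn => by
    have hsplit : pmeas μ n {x | 0 < ∑ i, z (x i)} + pmeas μ n {x | ∑ i, z (x i) ≤ 0} = 1 := by
      simpa only [pmeas, not_lt, sum_pi_prod_eq_one hμ1] using
        sum_filter_add_sum_filter_not univ (fun x : Fin n → V => 0 < ∑ i, z (x i))
          fun x => ∏ i, μ (x i)
    calc 1 - C / m ^ 2 / n ≤ pmeas μ n {x | 0 < ∑ i, z (x i)} := by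
          rw [div_div]; linarith [pmeas_sum_nonpos_le hμ0 hμ1 hmean rfl hn]
      _ ≤ alphaPow G μ n :=
          fmeas_le_alphaBar (prod_apply_nonneg hμ0) (isIndepSet_tpow_sum_pos hz n)
  refine tendsto_of_tendsto_of_tendsto_of_le_of_le' (g := fun n : ℕ => 1 - C / m ^ 2 / n)
    ?_ tendsto_const_nhds ?_ (Eventually.of_forall (alphaPow_le_one hμ0 hμ1))
  · simpa using tendsto_const_nhds.sub (tendsto_const_div_atTop_nhds_zero_nat (C / m ^ 2))
  · exact (eventually_ne_atTop 0).mono hlower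

lemma tendsto_alphaPow_of_isIndepSet (hμ0 : ∀ v, 0 ≤ μ v) (hμ1 : ∑ v, μ v = 1) {I : Finset V}
    (hI : IsIndepSet G I) (hgap : fmeas μ (nbhd G I) < fmeas μ I) :
    Tendsto (alphaPow G μ) atTop (nhds 1) := by
  classical
  refine tendsto_alphaPow_of_sum_pos hμ0 hμ1
    (z := fun v => (if v ∈ I then 1 else 0) - if v ∈ nbhd G I then 1 else 0) ?_ ?_
  · intro a b hab
    have hdisj := hI.disjoint_nbhd
    by_cases ha : a ∈ I <;> by_cases hb : b ∈ I
    · exact absurd hab (hI a ha b hb)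
    · simp [ha, hb, mem_nbhd.2 ⟨a, ha, hab⟩, disjoint_left.1 hdisj ha]
    · simp [ha, hb, mem_nbhd.2 ⟨b, hb, hab.symm⟩, disjoint_left.1 hdisj hb]
    · simp only [ha, hb, if_false, zero_sub]
      split_ifs <;> norm_num
  · simpa [mul_sub, sum_sub_distrib, fmeas] using hgap

end Concentration

end

theorem stmt_14 {V : Type*} [Fintype V] (G : SimpleGraph V) (μ : V → ℝ)
    (hμ0 : ∀ v, 0 ≤ μ v) (hμ1 : ∑ v, μ v = 1) :
    ((∃ n : ℕ, 1 ≤ n ∧ 1 / 2 < alphaPow G μ n) ↔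
      Tendsto (fun n => alphaPow G μ n) atTop (nhds 1)) ∧
    (Tendsto (fun n => alphaPow G μ n) atTop (nhds 1) ↔
      ∃ I : Finset V, IsIndepSet G I ∧ fmeas μ I > fmeas μ (nbhd G I)) := by
  have hac : (∃ n : ℕ, 1 ≤ n ∧ 1 / 2 < alphaPow G μ n) →
      ∃ I : Finset V, IsIndepSet G I ∧ fmeas μ I > fmeas μ (nbhd G I) := by
    rintro ⟨n, hn, hhalf⟩
    by_contra! hind
    exact (alphaPow_le_half hμ0 hμ1 hind (by omega)).not_gt hhalf
  have hcb : (∃ I : Finset V, IsIndepSet G I ∧ fmeas μ I > fmeas μ (nbhd G I)) →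
      Tendsto (fun n => alphaPow G μ n) atTop (nhds 1) := fun ⟨I, hI, hgap⟩ =>
    tendsto_alphaPow_of_isIndepSet hμ0 hμ1 hI hgap
  have hba : Tendsto (fun n => alphaPow G μ n) atTop (nhds 1) →
      ∃ n : ℕ, 1 ≤ n ∧ 1 / 2 < alphaPow G μ n := fun h =>
    ((eventually_ge_atTop 1).and (h.eventually (eventually_gt_nhds (by norm_num)))).exists
  exact ⟨⟨hcb ∘ hac, hba⟩, ⟨hac ∘ hba, hcb⟩⟩
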